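/- Let Λ(K) = −a log det(I_p − K) for Hermitian K < I_p (and Λ(K) = +∞ otherwise), where a > 0. Then the Legendre transform Λ*(X) = sup_{K Hermitian} (tr(KX) − Λ(K)) equals tr X − a log det X − ap(1 − log a) when X is positive definite, and Λ*(X) = +∞ when X is positive semidefinite Hermitian with det X = 0. -/

import Mathlib

/-!
For Hermitian `K` with `H = 1 - K` positive definite,
`tr (K X) - Λ K = tr X - (tr (H X) - a log det H)`. Writing `X = y* y`, the matrix `y H y*` is
positive definite with the trace and determinant of `H X`, so
`tr (H X) - a log det (H X) = ∑ (λᵢ - a log λᵢ)` over its eigenvalues, and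
`λ - a log λ ≥ a - a log a` with equality at `λ = a`. This is the upper bound, attained at
`K = 1 - a X⁻¹`. If `X v = 0` with `v ≠ 0`, then `K = -c v v*` has `tr (K X) = 0` and
`-Λ K = a log (1 + c |v|²)`, unbounded in `c`.
-/

open scoped ComplexOrder

attribute [local instance] Classical.propDecidable

/-- The log-Laplace transform of the complex Wishart distribution `W_p(a)`:
`Λ(K) = -a log det(I - K)` for Hermitian `K < I`, and `+∞` otherwise. -/
noncomputable def wishartLogLaplace (p : ℕ) (a : ℝ) (K : Matrix (Fin p) (Fin p) ℂ) : EReal :=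
  if K.IsHermitian ∧ ((1 : Matrix (Fin p) (Fin p) ℂ) - K).PosDef then
    (((-a) * Real.log ((1 - K).det.re) : ℝ) : EReal)
  else ⊤

/-- The Legendre transform `Λ*(X) = sup_{K Hermitian} (tr(KX) - Λ(K))`. -/
noncomputable def wishartLegendre (p : ℕ) (a : ℝ) (X : Matrix (Fin p) (Fin p) ℂ) : EReal :=
  ⨆ K : {K : Matrix (Fin p) (Fin p) ℂ // K.IsHermitian},
    ((((K : Matrix (Fin p) (Fin p) ℂ) * X).trace.re : ℝ) : EReal) - wishartLogLaplace p a K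

open Matrix Real

namespace Real

lemma mul_log_add_mul_one_sub_log_le {a x : ℝ} (ha : 0 < a) (hx : 0 < x) :
    a * log x + a * (1 - log a) ≤ x := by
  have h := mul_le_mul_of_nonneg_left (log_le_sub_one_of_pos (div_pos hx ha)) ha.le
  rw [log_div hx.ne' ha.ne', mul_sub_one, mul_div_cancel₀ _ ha.ne'] at h
  linarith

end Real

namespace Matrix

variable {n : Type*} [Fintype n] [DecidableEq n]

lemma IsHermitian.re_trace_eq_sum_eigenvalues {A : Matrix n n ℂ} (hA : A.IsHermitian) :
    A.trace.re = ∑ i, hA.eigenvalues i := by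
  simp [hA.trace_eq_sum_eigenvalues]

lemma IsHermitian.ofReal_re_det {A : Matrix n n ℂ} (hA : A.IsHermitian) :
    (A.det.re : ℂ) = A.det := by
  rw [hA.det_eq_prod_eigenvalues]
  norm_cast

lemma IsHermitian.re_det_eq_prod_eigenvalues {A : Matrix n n ℂ} (hA : A.IsHermitian) :
    A.det.re = ∏ i, hA.eigenvalues i := by
  rw [hA.det_eq_prod_eigenvalues]
  norm_cast

lemma IsHermitian.re_det_mul {A B : Matrix n n ℂ} (hB : B.IsHermitian) :
    (A * B).det.re = A.det.re * B.det.re := by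
  rw [det_mul, ← hB.ofReal_re_det, Complex.re_mul_ofReal, Complex.ofReal_re]

lemma PosDef.re_det_pos {A : Matrix n n ℂ} (hA : A.PosDef) : 0 < A.det.re :=
  (Complex.pos_iff.1 hA.det_pos).1

lemma PosDef.mul_log_det_add_le_trace {a : ℝ} (ha : 0 < a) {M : Matrix n n ℂ} (hM : M.PosDef) :
    a * log M.det.re + a * Fintype.card n * (1 - log a) ≤ M.trace.re := by
  have hpos := hM.eigenvalues_pos
  rw [hM.1.re_trace_eq_sum_eigenvalues, hM.1.re_det_eq_prod_eigenvalues,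
    log_prod fun i _ => (hpos i).ne']
  calc a * ∑ i, log (hM.1.eigenvalues i) + a * Fintype.card n * (1 - log a)
      = ∑ i, (a * log (hM.1.eigenvalues i) + a * (1 - log a)) := by
        simp only [Finset.sum_add_distrib, Finset.mul_sum, Finset.sum_const, Finset.card_univ,
          nsmul_eq_mul]
        ring
    _ ≤ ∑ i, hM.1.eigenvalues i :=
        Finset.sum_le_sum fun i _ => mul_log_add_mul_one_sub_log_le ha (hpos i)

lemma det_one_add_vecMulVec {R : Type*} [CommRing R] (u v : n → R) :
    (1 + vecMulVec u v).det = 1 + v ⬝ᵥ u := by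
  rw [vecMulVec_eq Unit, det_one_add_replicateCol_mul_replicateRow]

open scoped MatrixOrder in
lemma PosDef.mul_log_det_mul_add_le_trace_mul {a : ℝ} (ha : 0 < a) {H X : Matrix n n ℂ}
    (hH : H.PosDef) (hX : X.PosDef) :
    a * (log H.det.re + log X.det.re) + a * Fintype.card n * (1 - log a) ≤ (H * X).trace.re := by
  obtain ⟨y, hy, rfl⟩ :=
    CStarAlgebra.isStrictlyPositive_iff_eq_star_mul_self.mp hX.isStrictlyPositive
  rw [star_eq_conjTranspose] at hX ⊢
  have hM : (y * H * yᴴ).PosDef :=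
    hH.mul_mul_conjTranspose_same (vecMul_injective_iff_isUnit.2 hy)
  have hdet : (y * H * yᴴ).det = (H * (yᴴ * y)).det := by
    simp only [det_mul, det_conjTranspose]
    ring
  have htr : (y * H * yᴴ).trace = (H * (yᴴ * y)).trace := by
    rw [trace_mul_comm, ← Matrix.mul_assoc, trace_mul_comm]
  have key := hM.mul_log_det_add_le_trace ha
  rwa [htr, hdet, hX.1.re_det_mul, log_mul hH.re_det_pos.ne' hX.re_det_pos.ne'] at key

end Matrix

section Wishart

variable {p : ℕ} {a : ℝ}

lemma wishartLogLaplace_of_posDef {K : Matrix (Fin p) (Fin p) ℂ} (hK : K.IsHermitian)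
    (hK1 : (1 - K).PosDef) :
    wishartLogLaplace p a K = ((-a * log (1 - K).det.re : ℝ) : EReal) :=
  if_pos ⟨hK, hK1⟩

lemma wishartLogLaplace_of_not_posDef {K : Matrix (Fin p) (Fin p) ℂ} (hK1 : ¬(1 - K).PosDef) :
    wishartLogLaplace p a K = ⊤ :=
  if_neg fun h => hK1 h.2

lemma le_wishartLegendre {X K : Matrix (Fin p) (Fin p) ℂ} (hK : K.IsHermitian)
    (hK1 : (1 - K).PosDef) :
    (((K * X).trace.re + a * log (1 - K).det.re : ℝ) : EReal) ≤ wishartLegendre p a X := by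
  have h := le_iSup (fun K : {K : Matrix (Fin p) (Fin p) ℂ // K.IsHermitian} =>
      (((K * X : Matrix (Fin p) (Fin p) ℂ).trace.re : ℝ) : EReal) - wishartLogLaplace p a K)
    ⟨K, hK⟩
  rwa [wishartLogLaplace_of_posDef hK hK1, ← EReal.coe_sub, neg_mul, sub_neg_eq_add] at h

lemma wishartLegendre_le_of_posDef (ha : 0 < a) {X : Matrix (Fin p) (Fin p) ℂ} (hX : X.PosDef) :
    wishartLegendre p a X ≤
      ((X.trace.re - a * log X.det.re - a * p * (1 - log a) : ℝ) : EReal) := by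
  refine iSup_le fun ⟨K, hK⟩ => ?_
  by_cases hK1 : (1 - K).PosDef
  · rw [wishartLogLaplace_of_posDef hK hK1, ← EReal.coe_sub, EReal.coe_le_coe_iff]
    have key := hK1.mul_log_det_mul_add_le_trace_mul ha hX
    have htr : ((1 - K) * X).trace.re = X.trace.re - (K * X).trace.re := by
      simp [sub_mul, trace_sub]
    rw [Fintype.card_fin, htr] at key
    linarith
  · simp [wishartLogLaplace_of_not_posDef hK1]

lemma le_wishartLegendre_of_posDef (ha : 0 < a) {X : Matrix (Fin p) (Fin p) ℂ} (hX : X.PosDef) :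
    ((X.trace.re - a * log X.det.re - a * p * (1 - log a) : ℝ) : EReal) ≤
      wishartLegendre p a X := by
  -- the gradient `X - a (1 - K)⁻¹` of `K ↦ tr (K X) - Λ K` vanishes at `K = 1 - a X⁻¹`
  have hX1 : (a • X⁻¹).PosDef := hX.inv.smul ha
  have hK : (1 - a • X⁻¹).IsHermitian := isHermitian_one.sub hX1.1
  have h1K : 1 - (1 - a • X⁻¹) = a • X⁻¹ := sub_sub_cancel _ _
  have hXX : a • X⁻¹ * X = a • 1 := by
    rw [smul_mul, nonsing_inv_mul X (isUnit_iff_ne_zero.2 hX.det_pos.ne')]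
  have hdet : log (a • X⁻¹).det.re = p * log a - log X.det.re := by
    have hdet1 : (a • (1 : Matrix (Fin p) (Fin p) ℂ)).det.re = a ^ p := by
      rw [← Complex.coe_smul, det_smul, det_one, mul_one, Fintype.card_fin]
      norm_cast
    have h := congrArg (fun M => log M.det.re) hXX
    simp only [hX.1.re_det_mul, log_mul hX1.re_det_pos.ne' hX.re_det_pos.ne', hdet1,
      log_pow] at h
    linarith
  have htr : ((1 - a • X⁻¹) * X).trace.re = X.trace.re - a * p := by
    simp [sub_mul, hXX, trace_sub]
  convert le_wishartLegendre (a := a) (X := X) hK (by rwa [h1K]) using 2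
  rw [h1K, hdet, htr]
  ring

lemma le_wishartLegendre_of_mulVec_eq_zero {X : Matrix (Fin p) (Fin p) ℂ} {v : Fin p → ℂ}
    (hXv : X *ᵥ v = 0) {c : ℝ} (hc : 0 ≤ c) :
    ((a * log (1 + c * (star v ⬝ᵥ v).re) : ℝ) : EReal) ≤ wishartLegendre p a X := by
  have hP : (vecMulVec v (star v)).PosSemidef := posSemidef_vecMulVec_self_star v
  have hK : (-(c • vecMulVec v (star v))).IsHermitian := (hP.smul hc).1.neg
  have h1K : 1 - -(c • vecMulVec v (star v)) = 1 + vecMulVec (c • v) (star v) := by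
    rw [sub_neg_eq_add, smul_vecMulVec]
  have hK1 : (1 - -(c • vecMulVec v (star v))).PosDef := by
    rw [sub_neg_eq_add]
    exact PosDef.one.add_posSemidef (hP.smul hc)
  have htr : (-(c • vecMulVec v (star v)) * X).trace = 0 := by
    rw [trace_mul_comm, mul_neg, Matrix.mul_smul, mul_vecMulVec, hXv]
    simp
  convert le_wishartLegendre (a := a) (X := X) hK hK1 using 2
  rw [htr, h1K, det_one_add_vecMulVec]
  simp

lemma wishartLegendre_eq_top_of_det_eq_zero (ha : 0 < a) {X : Matrix (Fin p) (Fin p) ℂ}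
    (hX : X.det = 0) : wishartLegendre p a X = ⊤ := by
  obtain ⟨v, hv, hXv⟩ := exists_mulVec_eq_zero_iff.2 hX
  have hs : 0 < (star v ⬝ᵥ v).re := (Complex.pos_iff.1 (dotProduct_star_self_pos_iff.2 hv)).1
  refine (EReal.eq_top_iff_forall_lt _).2 fun r => ?_
  refine lt_of_lt_of_le ?_ (le_wishartLegendre_of_mulVec_eq_zero (a := a) hXv
    (div_pos (exp_pos (r / a)) hs).le)
  rw [div_mul_cancel₀ _ hs.ne', EReal.coe_lt_coe_iff, ← div_lt_iff₀' ha, ← exp_lt_exp,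
    exp_log (by positivity)]
  linarith

end Wishart

/-- The Legendre transform of the Wishart log-Laplace transform equals
`tr X - a log det X - a p (1 - log a)` for positive definite `X`, and `+∞` for
positive semidefinite `X` with `det X = 0`. -/
theorem wishartLegendre_eq {p : ℕ} (a : ℝ) (ha : 0 < a) (X : Matrix (Fin p) (Fin p) ℂ) :
    (X.PosDef →
      wishartLegendre p a X =
        ((X.trace.re - a * Real.log X.det.re - a * p * (1 - Real.log a) : ℝ) : EReal)) ∧
    (X.PosSemidef ∧ X.det = 0 → wishartLegendre p a X = ⊤) :=
  ⟨fun hX => (wishartLegendre_le_of_posDef ha hX).antisymm (le_wishartLegendre_of_posDef ha hX),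
    fun hX => wishartLegendre_eq_top_of_det_eq_zero ha hX.2⟩
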